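/- Correctness of masked comparison via modular reduction: let a, b be integers with 0 ≤ a, b < 2^l, let r ≥ 0 be an integer, and set z = b − a + 2^l + r. Define α = r mod 2^l and β = z mod 2^l. Then (a ≤ b) holds if and only if (z div 2^l) − (r div 2^l) − [β < α] = 1, where [β < α] is 1 if β < α and 0 otherwise. -/
import Mathlib

theorem dgk_masked_comparison_correct (l : ℕ) (a b r : ℤ)
    (ha0 : 0 ≤ a) (ha : a < 2 ^ l) (hb0 : 0 ≤ b) (hb : b < 2 ^ l) (hr : 0 ≤ r) :
    a ≤ b ↔
      (b - a + 2 ^ l + r) / 2 ^ l - r / 2 ^ l -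
        (if (b - a + 2 ^ l + r) % 2 ^ l < r % 2 ^ l then 1 else 0) = 1 := by
  set N : ℤ := 2 ^ l with hNdef
  have hN : 0 < N := by positivity
  set d : ℤ := b - a + N with hd
  have hdr_div : (d + r) / N = d / N + r / N + (d % N + r % N) / N := by
    conv_lhs => rw [← Int.mul_ediv_add_emod d N, ← Int.mul_ediv_add_emod r N]
    rw [show N * (d / N) + d % N + (N * (r / N) + r % N)
        = (d % N + r % N) + (d / N + r / N) * N by ring,
      Int.add_mul_ediv_right _ _ hN.ne']
    ring
  have hdr_mod : (d + r) % N = (d % N + r % N) % N := by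
    rw [Int.add_emod]
  have hdm0 : 0 ≤ d % N := Int.emod_nonneg _ hN.ne'
  have hdm1 : d % N < N := Int.emod_lt_of_pos _ hN
  have hrm0 : 0 ≤ r % N := Int.emod_nonneg _ hN.ne'
  have hrm1 : r % N < N := Int.emod_lt_of_pos _ hN
  have hdiv_one : ∀ x : ℤ, N ≤ x → x < 2 * N → x / N = 1 := by
    intro x h1 h2
    have : x = (x - N) + 1 * N := by ring
    rw [this, Int.add_mul_ediv_right _ _ hN.ne',
      Int.ediv_eq_zero_of_lt (by omega) (by omega)]
    ring
  have hddiv : d / N = if a ≤ b then 1 else 0 := by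
    split_ifs with h
    · exact hdiv_one d (by omega) (by omega)
    · exact Int.ediv_eq_zero_of_lt (by omega) (by omega)
  rw [hdr_div, hdr_mod]
  rcases lt_or_ge (d % N + r % N) N with hs | hs
  · have hmod : (d % N + r % N) % N = d % N + r % N :=
      Int.emod_eq_of_lt (by omega) hs
    have hdiv : (d % N + r % N) / N = 0 :=
      Int.ediv_eq_zero_of_lt (by omega) hs
    rw [hmod, hdiv, if_neg (by omega)]
    split_ifs at hddiv <;> omega
  · have hmod : (d % N + r % N) % N = d % N + r % N - N := by
      have h' : d % N + r % N = (d % N + r % N - N) + N * 1 := by ring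
      conv_lhs => rw [h']
      rw [Int.add_mul_emod_self_left]
      exact Int.emod_eq_of_lt (by omega) (by omega)
    have hdiv : (d % N + r % N) / N = 1 := hdiv_one _ hs (by omega)
    have hdmN : 0 < d % N := by
      by_contra h
      have : d % N = 0 := by omega
      omega
    rw [hmod, hdiv, if_pos (by omega)]
    split_ifs at hddiv <;> omega
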